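/- Assume ω₀ ≤ −(n−1) and that λ has bounded derivatives of all orders, i.e. for every integer k ≥ 0 there is a constant c_k with |λ^{(k)}(t)| ≤ c_k for all t ∈ ℝ. Then every brane scale function f satisfies the ARW conditions with constant γ̃ = (n−1)/2 and mass m̃ = m; in particular lim_{τ→0⁻} f′(τ)²·e^{(n−1)f(τ)} = m. -/

import Mathlib

/-!
Write the Friedmann equation as `f'² = R(f)` with `R(u) = m e^{-2γu} + G(u)`, `γ = (n-1)/2`.
Because `ω₀ ≤ -(n-1)`, `(σ + ρ₀ e^{-(n+ω₀)u-μ̃(u)})² e^{2u} = (σ eᵘ + ρ₀ e^{(1-n-ω₀)u-μ̃(u)})²`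
involves only exponentials of nonnegative rate, so `G` is smooth with all derivatives bounded
on `(-∞, 0]` and converges at `-∞`. As `f → -∞` at the singularity, `f'² ≍ e^{-2γf}`; moreover
`f'' = R'(f)/2` and `f'' + γf'² = ψ(f)` with `ψ = G'/2 + γG`, the exponential mode cancelling.
The bounds `|R⁽ⁱ⁾(u)| ≲ e^{-2γu} ≲ f'²` bootstrap through Faà di Bruno's formula to
`|f⁽ⁱ⁾| ≤ (c|f'|)ⁱ`, and `ψ` converges at `-∞` because `G''` is bounded and `G` converges,
which forces `G' → 0`.
-/

/-- `f` satisfies the ARW conditions with constant `γ > 0` and mass `mt > 0`: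
`f'² e^{2γf} → mt` as `τ → 0⁻`, the limit of `f'' + γ f'²` exists, and the iterated
derivatives of `f'' + γ f'²` and of `f` of order `k ≥ 1` are bounded by `c_k |f'|^k`
near the singularity. -/
def ARWConds (γ mt : ℝ) (f : ℝ → ℝ) : Prop :=
  Filter.Tendsto (fun τ => (deriv f τ) ^ 2 * Real.exp (2 * γ * f τ))
      (nhdsWithin 0 (Set.Iio 0)) (nhds mt)
  ∧ (∃ L : ℝ, Filter.Tendsto (fun τ => deriv (deriv f) τ + γ * (deriv f τ) ^ 2)
      (nhdsWithin 0 (Set.Iio 0)) (nhds L))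
  ∧ ∃ δ : ℝ, 0 < δ ∧ ∀ k : ℕ, 1 ≤ k → ∃ c : ℝ,
      ∀ τ ∈ Set.Ioo (-δ) (0:ℝ),
        |iteratedDeriv k (fun s => deriv (deriv f) s + γ * (deriv f s) ^ 2) τ|
            ≤ c * |deriv f τ| ^ k
        ∧ |iteratedDeriv k f τ| ≤ c * |deriv f τ| ^ k

open Real Filter Set Topology
open scoped ContDiff Nat

def bddDerivsOnNonpos : Subalgebra ℝ (ℝ → ℝ) where
  carrier := {g | ContDiff ℝ ∞ g ∧ ∀ k : ℕ, ∃ c, ∀ u ≤ (0 : ℝ), |iteratedDeriv k g u| ≤ c}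
  mul_mem' := by
    rintro g₁ g₂ ⟨hg₁, hb₁⟩ ⟨hg₂, hb₂⟩
    refine ⟨hg₁.mul hg₂, fun k => ?_⟩
    choose c₁ hc₁ using hb₁
    choose c₂ hc₂ using hb₂
    refine ⟨∑ i ∈ Finset.range (k + 1), k.choose i * (c₁ i * c₂ (k - i)), fun u hu => ?_⟩
    rw [iteratedDeriv_mul ((contDiff_infty.1 hg₁ k).contDiffAt)
      ((contDiff_infty.1 hg₂ k).contDiffAt)]
    refine (Finset.abs_sum_le_sum_abs _ _).trans (Finset.sum_le_sum fun i _ => ?_)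
    rw [mul_assoc, abs_mul, abs_mul, Nat.abs_cast]
    exact mul_le_mul_of_nonneg_left (mul_le_mul (hc₁ i u hu) (hc₂ _ u hu) (abs_nonneg _)
      ((abs_nonneg _).trans (hc₁ i u hu))) (Nat.cast_nonneg _)
  add_mem' := by
    rintro g₁ g₂ ⟨hg₁, hb₁⟩ ⟨hg₂, hb₂⟩
    refine ⟨hg₁.add hg₂, fun k => ?_⟩
    obtain ⟨c₁, hc₁⟩ := hb₁ k
    obtain ⟨c₂, hc₂⟩ := hb₂ k
    refine ⟨c₁ + c₂, fun u hu => ?_⟩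
    rw [iteratedDeriv_add ((contDiff_infty.1 hg₁ k).contDiffAt)
      ((contDiff_infty.1 hg₂ k).contDiffAt)]
    exact (abs_add_le _ _).trans (add_le_add (hc₁ u hu) (hc₂ u hu))
  algebraMap_mem' c := by
    refine ⟨contDiff_const, fun k => ⟨|c|, fun u _ => ?_⟩⟩
    change |iteratedDeriv k (fun _ => c) u| ≤ |c|
    rw [iteratedDeriv_const]
    split_ifs <;> simp

namespace bddDerivsOnNonpos

variable {g h : ℝ → ℝ}

theorem exists_bound_of_le (hg : g ∈ bddDerivsOnNonpos) (k : ℕ) :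
    ∃ c, ∀ i ≤ k, ∀ u ≤ (0 : ℝ), |iteratedDeriv i g u| ≤ c := by
  induction k with
  | zero =>
    obtain ⟨c, hc⟩ := hg.2 0
    exact ⟨c, fun i hi => by rwa [Nat.le_zero.1 hi]⟩
  | succ k ih =>
    obtain ⟨c, hc⟩ := ih
    obtain ⟨c', hc'⟩ := hg.2 (k + 1)
    refine ⟨max c c', fun i hi u hu => ?_⟩
    rcases Nat.le_succ_iff.1 hi with hi | rfl
    · exact (hc i hi u hu).trans (le_max_left _ _)
    · exact (hc' u hu).trans (le_max_right _ _)

theorem deriv_mem (hg : g ∈ bddDerivsOnNonpos) : deriv g ∈ bddDerivsOnNonpos :=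
  ⟨(contDiff_infty_iff_deriv.1 hg.1).2, fun k => by
    simpa only [← iteratedDeriv_succ'] using hg.2 (k + 1)⟩

/-- Inductively `g⁽ᵏ⁾ = r_k g` with `r_{k+1} = r_k' + r_k h`. -/
theorem mem_of_deriv_eq_mul (hg : ContDiff ℝ ∞ g) (hgb : ∃ c, ∀ u ≤ (0 : ℝ), |g u| ≤ c)
    (hh : h ∈ bddDerivsOnNonpos) (hgh : deriv g = h * g) : g ∈ bddDerivsOnNonpos := by
  have hgd : Differentiable ℝ g := hg.differentiable (by simp)
  have key : ∀ k, ∃ r ∈ bddDerivsOnNonpos, iteratedDeriv k g = r * g := by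
    intro k
    induction k with
    | zero => exact ⟨1, one_mem _, by simp⟩
    | succ k ih =>
      obtain ⟨r, hr, hrg⟩ := ih
      refine ⟨deriv r + r * h, add_mem (deriv_mem hr) (mul_mem hr hh), ?_⟩
      have hrd : Differentiable ℝ r := hr.1.differentiable (by simp)
      ext u
      rw [iteratedDeriv_succ, hrg, deriv_mul (hrd u) (hgd u), hgh]
      simp only [Pi.mul_apply, Pi.add_apply]
      ring
  refine ⟨hg, fun k => ?_⟩
  obtain ⟨r, hr, hrg⟩ := key k
  obtain ⟨c, hc⟩ := hr.2 0
  obtain ⟨c', hc'⟩ := hgb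
  refine ⟨c * c', fun u hu => ?_⟩
  have hr0 := hc u hu
  rw [iteratedDeriv_zero] at hr0
  rw [hrg, Pi.mul_apply, abs_mul]
  exact mul_le_mul hr0 (hc' u hu) (abs_nonneg _) ((abs_nonneg _).trans hr0)

end bddDerivsOnNonpos

theorem Continuous.exists_abs_le_of_tendsto_atBot {g : ℝ → ℝ} {L : ℝ} (hg : Continuous g)
    (hgL : Tendsto g atBot (𝓝 L)) : ∃ c, ∀ u ≤ (0 : ℝ), |g u| ≤ c := by
  obtain ⟨T, hT⟩ := eventually_atBot.1 (hgL.abs.eventually (eventually_le_nhds (lt_add_one |L|)))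
  obtain ⟨C, hC⟩ := (isCompact_Icc (a := T) (b := 0)).exists_bound_of_continuousOn hg.continuousOn
  refine ⟨max (|L| + 1) C, fun u hu => ?_⟩
  rcases le_total u T with huT | hTu
  · exact (hT u huT).trans (le_max_left _ _)
  · exact (hC u ⟨hTu, hu⟩).trans (le_max_right _ _)

theorem abs_sub_sub_mul_deriv_le {g : ℝ → ℝ} {M u h : ℝ} (hg : ContDiff ℝ 2 g) (hh : 0 ≤ h)
    (hM : ∀ v ∈ Icc u (u + h), |deriv (deriv g) v| ≤ M) :
    |g (u + h) - g u - h * deriv g u| ≤ M * h ^ 2 := by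
  have hg₁ : Differentiable ℝ g := hg.differentiable (by norm_num)
  have hg₂ : Differentiable ℝ (deriv g) := by
    simpa using hg.differentiable_iteratedDeriv 1 (by norm_num)
  have hu : u ∈ Icc u (u + h) := left_mem_Icc.2 (by linarith)
  have hlip : ∀ v ∈ Icc u (u + h), |deriv g v - deriv g u| ≤ M * h := by
    intro v hv
    have := (convex_Icc u (u + h)).norm_image_sub_le_of_norm_deriv_le (fun x _ => hg₂ x) hM hu hv
    rw [Real.norm_eq_abs, Real.norm_eq_abs, abs_of_nonneg (sub_nonneg.2 hv.1)] at this
    nlinarith [(abs_nonneg _).trans (hM u hu), hv.2]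
  have hp : ∀ v, HasDerivAt (fun v => g v - v * deriv g u) (deriv g v - deriv g u) v := fun v => by
    simpa using (hg₁ v).hasDerivAt.fun_sub ((hasDerivAt_id' v).mul_const (deriv g u))
  have := (convex_Icc u (u + h)).norm_image_sub_le_of_norm_deriv_le
    (fun v _ => (hp v).differentiableAt) (fun v hv => by rw [(hp v).deriv]; exact hlip v hv)
    hu (right_mem_Icc.2 (by linarith))
  rw [Real.norm_eq_abs, Real.norm_eq_abs, add_sub_cancel_left, abs_of_nonneg hh] at this
  rw [sq, ← mul_assoc]
  convert this using 2
  ring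

/-- Taylor: `h g'(u) = g(u + h) - g(u) + O(M h²)`; take `h ≍ ε`, then `u` far out. -/
theorem tendsto_deriv_atBot_of_tendsto {g : ℝ → ℝ} {L M : ℝ} (hg : ContDiff ℝ 2 g)
    (hgL : Tendsto g atBot (𝓝 L)) (hM : ∀ u ≤ (0 : ℝ), |deriv (deriv g) u| ≤ M) :
    Tendsto (deriv g) atBot (𝓝 0) := by
  refine Metric.tendsto_nhds.2 fun ε hε => ?_
  set h := ε / (4 * (|M| + 1)) with hh
  have hh0 : 0 < h := by positivity
  have hMh : |M| * h ≤ ε / 4 := by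
    rw [hh, mul_div_assoc', div_le_div_iff₀ (by positivity) (by norm_num)]
    nlinarith [abs_nonneg M]
  obtain ⟨N, hN⟩ := eventually_atBot.1 (Metric.tendsto_nhds.1 hgL (ε * h / 4) (by positivity))
  refine eventually_atBot.2 ⟨min N 0 - h, fun u hu => ?_⟩
  have huN : u + h ≤ min N 0 := by linarith
  have hT := abs_sub_sub_mul_deriv_le hg hh0.le fun v hv =>
    hM v (hv.2.trans (huN.trans (min_le_right _ _)))
  have h₁ := hN (u + h) (huN.trans (min_le_left _ _))
  have h₂ := hN u (by linarith [min_le_left N 0])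
  rw [Real.dist_eq] at h₁ h₂
  rw [Real.dist_eq, sub_zero]
  have hdiff : |g (u + h) - g u| < ε * h / 2 := by
    calc |g (u + h) - g u| ≤ |g (u + h) - L| + |g u - L| := by
          simpa [abs_sub_comm] using abs_sub_le (g (u + h)) L (g u)
      _ < ε * h / 2 := by linarith
  have hmain : h * |deriv g u| < h * ε := by
    calc h * |deriv g u| = |h * deriv g u| := by rw [abs_mul, abs_of_pos hh0]
      _ ≤ |g (u + h) - g u| + |g (u + h) - g u - h * deriv g u| := by
          simpa using abs_sub (g (u + h) - g u) (g (u + h) - g u - h * deriv g u)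
      _ < ε * h / 2 + |M| * h * h := by
          nlinarith [le_abs_self M, hT]
      _ ≤ h * ε := by nlinarith
  exact lt_of_mul_lt_mul_left hmain hh0.le

theorem abs_iteratedDeriv_comp_le {g f : ℝ → ℝ} {s : Set ℝ} {n : ℕ} {x C D : ℝ} (hs : IsOpen s)
    (hg : ContDiff ℝ n g) (hf : ContDiffOn ℝ n f s) (hx : x ∈ s)
    (hC : ∀ i ≤ n, |iteratedDeriv i g (f x)| ≤ C)
    (hD : ∀ i, 1 ≤ i → i ≤ n → |iteratedDeriv i f x| ≤ D ^ i) :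
    |iteratedDeriv n (g ∘ f) x| ≤ n ! * C * D ^ n := by
  have hnorm : ∀ {p : ℝ → ℝ} {t : Set ℝ} {y : ℝ} (i : ℕ), IsOpen t → y ∈ t →
      ‖iteratedFDerivWithin ℝ i p t y‖ = |iteratedDeriv i p y| := fun i ht hy => by
    rw [iteratedFDerivWithin_of_isOpen i ht hy, norm_iteratedFDeriv_eq_norm_iteratedDeriv,
      Real.norm_eq_abs]
  rw [← hnorm n hs hx]
  exact norm_iteratedFDerivWithin_comp_le hg.contDiffOn hf le_rfl uniqueDiffOn_univ
    hs.uniqueDiffOn (mapsTo_univ _ _) hx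
    (fun i hi => (hnorm i isOpen_univ (mem_univ _)).trans_le (hC i hi))
    (fun i hi hin => (hnorm i hs hx).trans_le (hD i hi hin))

theorem deriv_deriv_eq_of_sq_deriv_eq {f R : ℝ → ℝ} {s : Set ℝ} {x : ℝ} (hs : IsOpen s)
    (hf : ContDiffOn ℝ 2 f s) (hR : Differentiable ℝ R)
    (hfR : ∀ y ∈ s, deriv f y ^ 2 = R (f y)) (hx : x ∈ s) (hfx : deriv f x ≠ 0) :
    deriv (deriv f) x = deriv R (f x) / 2 := by
  have hf₁ : HasDerivAt f (deriv f x) x :=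
    ((hf.contDiffAt (hs.mem_nhds hx)).differentiableAt (by norm_num)).hasDerivAt
  have hf₂ : HasDerivAt (deriv f) (deriv (deriv f) x) x :=
    (((hf.deriv_of_isOpen hs (by norm_num : (1 : WithTop ℕ∞) + 1 ≤ 2)).contDiffAt
      (hs.mem_nhds hx)).differentiableAt one_ne_zero).hasDerivAt
  have hsq : HasDerivAt (fun y => deriv f y ^ 2) (deriv R (f x) * deriv f x) x :=
    ((hR (f x)).hasDerivAt.comp x hf₁).congr_of_eventuallyEq
      (eventually_of_mem (hs.mem_nhds hx) hfR)
  have := (hf₂.pow 2).unique hsq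
  field_simp
  apply mul_left_cancel₀ hfx
  push_cast at this
  linarith

/-- Faà di Bruno turns bounds `|f⁽ⁱ⁾| ≤ (c |f'|)ⁱ` for `i ≤ j + 1` into one for `i = j + 2`. -/
theorem exists_abs_iteratedDeriv_le_of_deriv_deriv_eq_comp {f Q : ℝ → ℝ} {s : Set ℝ}
    (hs : IsOpen s) (hf : ContDiffOn ℝ ∞ f s) (hQ : ContDiff ℝ ∞ Q)
    (hfQ : ∀ x ∈ s, deriv (deriv f) x = Q (f x))
    (hQb : ∀ j, ∃ C, ∀ x ∈ s, ∀ i ≤ j, |iteratedDeriv i Q (f x)| ≤ C * deriv f x ^ 2)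
    (k : ℕ) : ∃ c, ∀ x ∈ s, ∀ i, 1 ≤ i → i ≤ k → |iteratedDeriv i f x| ≤ (c * |deriv f x|) ^ i := by
  suffices h : ∀ j : ℕ, ∃ c, 0 ≤ c ∧ ∀ x ∈ s, ∀ i, 1 ≤ i → i ≤ j + 1 →
      |iteratedDeriv i f x| ≤ (c * |deriv f x|) ^ i by
    obtain ⟨c, -, hc⟩ := h k
    exact ⟨c, fun x hx i hi hik => hc x hx i hi (by omega)⟩
  intro j
  induction j with
  | zero =>
    refine ⟨1, zero_le_one, fun x _ i hi hi' => ?_⟩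
    obtain rfl : i = 1 := by omega
    simp
  | succ j ih =>
    obtain ⟨c, hc0, hc⟩ := ih
    obtain ⟨C, hC⟩ := hQb j
    set c' := max c (max 1 (j ! * |C| * c ^ j))
    have hcc' : c ≤ c' := le_max_left _ _
    have hc'1 : 1 ≤ c' := (le_max_left _ _).trans (le_max_right _ _)
    refine ⟨c', hc0.trans hcc', fun x hx i hi hij => ?_⟩
    obtain hij' | rfl : i < j + 2 ∨ i = j + 2 := by omega
    · exact (hc x hx i hi (by omega)).trans (pow_le_pow_left₀ (by positivity)
        (mul_le_mul_of_nonneg_right hcc' (abs_nonneg _)) i)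
    have hcomp : iteratedDeriv (j + 2) f x = iteratedDeriv j (Q ∘ f) x := by
      rw [iteratedDeriv_succ', iteratedDeriv_succ']
      exact (Set.EqOn.iteratedDeriv_of_isOpen hfQ hs j) hx
    have hFdB := abs_iteratedDeriv_comp_le hs (contDiff_infty.1 hQ j)
      (contDiffOn_infty.1 hf _) hx (fun i hi => hC x hx i hi)
      (fun i hi hij => hc x hx i hi (by omega))
    have hK : j ! * C * c ^ j ≤ c' ^ (j + 2) := calc
      _ ≤ j ! * |C| * c ^ j := by gcongr; exact le_abs_self C
      _ ≤ c' := (le_max_right _ _).trans (le_max_right _ _)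
      _ ≤ c' ^ (j + 2) := le_self_pow₀ hc'1 (by omega)
    rw [hcomp]
    calc |iteratedDeriv j (Q ∘ f) x| ≤ j ! * (C * deriv f x ^ 2) * (c * |deriv f x|) ^ j := hFdB
      _ = j ! * C * c ^ j * |deriv f x| ^ (j + 2) := by rw [← sq_abs, mul_pow]; ring
      _ ≤ c' ^ (j + 2) * |deriv f x| ^ (j + 2) := mul_le_mul_of_nonneg_right hK (by positivity)
      _ = (c' * |deriv f x|) ^ (j + 2) := (mul_pow _ _ _).symm

theorem exists_abs_iteratedDeriv_le_mul_abs_deriv_pow {γ : ℝ} {f Q ψ : ℝ → ℝ} {s : Set ℝ}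
    (hs : IsOpen s) (hf : ContDiffOn ℝ ∞ f s) (hQ : ContDiff ℝ ∞ Q) (hψ : ContDiff ℝ ∞ ψ)
    (hfQ : ∀ x ∈ s, deriv (deriv f) x = Q (f x))
    (hfψ : ∀ x ∈ s, deriv (deriv f) x + γ * deriv f x ^ 2 = ψ (f x))
    (hQb : ∀ j, ∃ C, ∀ x ∈ s, ∀ i ≤ j, |iteratedDeriv i Q (f x)| ≤ C * deriv f x ^ 2)
    (hψb : ∀ j, ∃ C, ∀ x ∈ s, ∀ i ≤ j, |iteratedDeriv i ψ (f x)| ≤ C) {k : ℕ} (hk : 1 ≤ k) :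
    ∃ c, ∀ x ∈ s,
      |iteratedDeriv k (fun y => deriv (deriv f) y + γ * deriv f y ^ 2) x| ≤ c * |deriv f x| ^ k
        ∧ |iteratedDeriv k f x| ≤ c * |deriv f x| ^ k := by
  obtain ⟨c, hc⟩ := exists_abs_iteratedDeriv_le_of_deriv_deriv_eq_comp hs hf hQ hfQ hQb k
  obtain ⟨C, hC⟩ := hψb k
  refine ⟨max (k ! * C * c ^ k) (c ^ k), fun x hx => ⟨?_, ?_⟩⟩
  · have hcomp := abs_iteratedDeriv_comp_le hs (contDiff_infty.1 hψ k)
      (contDiffOn_infty.1 hf _) hx (hC x hx) (hc x hx)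
    rw [mul_pow, ← mul_assoc] at hcomp
    rw [(Set.EqOn.iteratedDeriv_of_isOpen hfψ hs k) hx]
    exact hcomp.trans (mul_le_mul_of_nonneg_right (le_max_left _ _) (by positivity))
  · refine (hc x hx k hk le_rfl).trans ?_
    rw [mul_pow]
    exact mul_le_mul_of_nonneg_right (le_max_right _ _) (by positivity)

theorem exists_abs_iteratedDeriv_const_mul_exp_add_le {G : ℝ → ℝ}
    (hG : G ∈ bddDerivsOnNonpos) {b : ℝ} (hb : b ≤ 0) (m : ℝ) (k : ℕ) :
    ∃ C, ∀ i ≤ k, ∀ u ≤ (0 : ℝ),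
      |iteratedDeriv i (fun u => m * exp (b * u) + G u) u| ≤ C * exp (b * u) := by
  obtain ⟨c, hc⟩ := bddDerivsOnNonpos.exists_bound_of_le hG k
  refine ⟨|m| * (1 + |b|) ^ k + |c|, fun i hi u hu => ?_⟩
  have h1 : 1 ≤ exp (b * u) := one_le_exp (mul_nonneg_of_nonpos_of_nonpos hb hu)
  have hbi : |b| ^ i ≤ (1 + |b|) ^ k := (pow_le_pow_left₀ (abs_nonneg b) (by linarith) i).trans
    (pow_le_pow_right₀ (by linarith [abs_nonneg b]) hi)
  rw [iteratedDeriv_fun_add (by fun_prop) (contDiff_infty.1 hG.1 i).contDiffAt,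
    iteratedDeriv_const_mul_field, iteratedDeriv_exp_const_mul]
  calc _ ≤ |m * (b ^ i * exp (b * u))| + |iteratedDeriv i G u| := abs_add_le _ _
    _ ≤ |m| * (1 + |b|) ^ k * exp (b * u) + |c| * exp (b * u) := by
      rw [abs_mul, abs_mul, abs_pow, abs_of_pos (exp_pos _), ← mul_assoc]
      gcongr
      exact (hc i hi u hu).trans ((le_abs_self c).trans (le_mul_of_one_le_right (abs_nonneg c) h1))
    _ = _ := by ring

theorem eventually_exp_le_of_abs_le {γ m c : ℝ} {G : ℝ → ℝ} (hγ : 0 < γ) (hm : 0 < m)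
    (hGc : ∀ u ≤ (0 : ℝ), |G u| ≤ c) :
    ∀ᶠ u in atBot, u ≤ 0 ∧ exp (-(2 * γ) * u) ≤ 2 / m * (m * exp (-(2 * γ) * u) + G u) := by
  have hto : Tendsto (fun u => m * exp (-(2 * γ) * u)) atBot atTop :=
    (tendsto_exp_atTop.comp (tendsto_id.const_mul_atBot_of_neg (by linarith))).const_mul_atTop hm
  filter_upwards [eventually_le_atBot 0, hto.eventually_ge_atTop (2 * c)] with u hu hcu
  refine ⟨hu, ?_⟩
  have := abs_le.1 (hGc u hu)
  rw [div_mul_eq_mul_div, le_div_iff₀ hm]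
  nlinarith

theorem exists_abs_iteratedDeriv_half_deriv_le_mul_sq {γ m : ℝ} {G f : ℝ → ℝ} {s : Set ℝ}
    (hγ : 0 ≤ γ) (hm : 0 < m) (hG : G ∈ bddDerivsOnNonpos)
    (hs : ∀ x ∈ s, f x ≤ 0 ∧ exp (-(2 * γ) * f x) ≤ 2 / m * deriv f x ^ 2) (j : ℕ) :
    ∃ C, ∀ x ∈ s, ∀ i ≤ j,
      |iteratedDeriv i (fun u => deriv (fun u => m * exp (-(2 * γ) * u) + G u) u / 2) (f x)|
        ≤ C * deriv f x ^ 2 := by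
  obtain ⟨C, hC⟩ := exists_abs_iteratedDeriv_const_mul_exp_add_le hG
    (by linarith : -(2 * γ) ≤ 0) m (j + 1)
  refine ⟨|C| / m, fun x hx i hi => ?_⟩
  rw [iteratedDeriv_div_const, ← iteratedDeriv_succ', abs_div, abs_two]
  calc _ ≤ |C| * exp (-(2 * γ) * f x) / 2 := by
        gcongr
        exact (hC (i + 1) (by omega) (f x) (hs x hx).1).trans
          (mul_le_mul_of_nonneg_right (le_abs_self C) (exp_pos _).le)
    _ ≤ |C| * (2 / m * deriv f x ^ 2) / 2 := by gcongr; exact (hs x hx).2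
    _ = |C| / m * deriv f x ^ 2 := by field_simp

theorem deriv_const_mul_exp_add_div_two_add_mul {G : ℝ → ℝ} (hG : Differentiable ℝ G)
    (m γ u : ℝ) :
    deriv (fun u => m * exp (-(2 * γ) * u) + G u) u / 2 + γ * (m * exp (-(2 * γ) * u) + G u)
      = 2⁻¹ * deriv G u + γ * G u := by
  have hexp : HasDerivAt (fun u => m * exp (-(2 * γ) * u))
      (m * (exp (-(2 * γ) * u) * (-(2 * γ)))) u := by
    simpa using (((hasDerivAt_id' u).const_mul (-(2 * γ))).exp).const_mul m
  rw [(hexp.fun_add (hG u).hasDerivAt).deriv]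
  ring

theorem tendsto_sq_deriv_mul_exp_of_sq_deriv_eq {γ m c : ℝ} {G f : ℝ → ℝ} {l : Filter ℝ}
    (hγ : 0 < γ) (hGc : ∀ u ≤ (0 : ℝ), |G u| ≤ c) (hfb : Tendsto f l atBot)
    (hfG : ∀ᶠ τ in l, deriv f τ ^ 2 = m * exp (-(2 * γ) * f τ) + G (f τ)) :
    Tendsto (fun τ => deriv f τ ^ 2 * exp (2 * γ * f τ)) l (𝓝 m) := by
  have hz : Tendsto (fun τ => exp (2 * γ * f τ)) l (𝓝 0) :=
    tendsto_exp_atBot.comp (hfb.const_mul_atBot (by linarith))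
  have hGf : ∀ᶠ τ in l, |G (f τ)| ≤ c :=
    (hfb.eventually (eventually_le_atBot 0)).mono fun τ hτ => hGc _ hτ
  have hlim : Tendsto (fun τ => m + G (f τ) * exp (2 * γ * f τ)) l (𝓝 m) := by
    simpa only [add_zero] using tendsto_const_nhds.add (bdd_le_mul_tendsto_zero' c hGf hz)
  refine hlim.congr' ?_
  filter_upwards [hfG] with τ hτ
  have h1 : exp (-(2 * γ) * f τ) * exp (2 * γ * f τ) = 1 := by
    rw [← exp_add, neg_mul, neg_add_cancel, exp_zero]
  rw [hτ]
  linear_combination (-m) * h1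

theorem tendsto_half_deriv_add_mul_atBot {G : ℝ → ℝ} {L : ℝ} (hG : G ∈ bddDerivsOnNonpos)
    (hGL : Tendsto G atBot (𝓝 L)) (γ : ℝ) :
    Tendsto (fun u => 2⁻¹ * deriv G u + γ * G u) atBot (𝓝 (γ * L)) := by
  obtain ⟨M, hM⟩ := hG.2 2
  have hG' : Tendsto (deriv G) atBot (𝓝 0) :=
    tendsto_deriv_atBot_of_tendsto (contDiff_infty.1 hG.1 2) hGL fun u hu => by
      simpa [iteratedDeriv_succ] using hM u hu
  simpa using (tendsto_const_nhds.mul hG').add (tendsto_const_nhds.mul hGL)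

theorem arwConds_of_sq_deriv_eq {γ m L a : ℝ} {G f : ℝ → ℝ} (hγ : 0 < γ) (hm : 0 < m)
    (hG : G ∈ bddDerivsOnNonpos) (hGL : Tendsto G atBot (𝓝 L)) (ha : 0 < a)
    (hf : ContDiffOn ℝ ∞ f (Ioo (-a) 0)) (hfb : Tendsto f (𝓝[<] 0) atBot)
    (hfG : ∀ τ ∈ Ioo (-a) 0, deriv f τ ^ 2 = m * exp (-(2 * γ) * f τ) + G (f τ)) :
    ARWConds γ m f := by
  set R : ℝ → ℝ := fun u => m * exp (-(2 * γ) * u) + G u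
  set ψ : ℝ → ℝ := fun u => 2⁻¹ * deriv G u + γ * G u
  have hGs := hG.1
  have hRs : ContDiff ℝ ∞ R := by fun_prop
  have hψs : ψ ∈ bddDerivsOnNonpos := add_mem (mul_mem (bddDerivsOnNonpos.algebraMap_mem 2⁻¹)
    (bddDerivsOnNonpos.deriv_mem hG)) (mul_mem (bddDerivsOnNonpos.algebraMap_mem γ) hG)
  obtain ⟨c, hc⟩ := hG.2 0
  simp only [iteratedDeriv_zero] at hc
  have hI : Ioo (-a) 0 ∈ 𝓝[<] (0 : ℝ) := Ioo_mem_nhdsLT (by linarith)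
  obtain ⟨l, hl, hJ⟩ := mem_nhdsLT_iff_exists_Ioo_subset.1
    (inter_mem hI (hfb.eventually (eventually_exp_le_of_abs_le hγ hm hc)))
  have hJI : Ioo l 0 ⊆ Ioo (-a) 0 := fun x hx => (hJ hx).1
  have hJ' : ∀ x ∈ Ioo l 0, f x ≤ 0 ∧ exp (-(2 * γ) * f x) ≤ 2 / m * deriv f x ^ 2 :=
    fun x hx => by simpa only [hfG x (hJI hx), mem_ofPred_eq] using (hJ hx).2
  have hfQ : ∀ x ∈ Ioo l 0, deriv (deriv f) x = deriv R (f x) / 2 := fun x hx =>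
    deriv_deriv_eq_of_sq_deriv_eq isOpen_Ioo (contDiffOn_infty.1 hf 2)
      (hRs.differentiable (by simp)) hfG (hJI hx)
      fun h0 => by simpa [h0] using (exp_pos _).trans_le (hJ' x hx).2
  have hfψ : ∀ x ∈ Ioo l 0, deriv (deriv f) x + γ * deriv f x ^ 2 = ψ (f x) := fun x hx => by
    rw [hfQ x hx, hfG x (hJI hx)]
    exact deriv_const_mul_exp_add_div_two_add_mul (hGs.differentiable (by simp)) m γ (f x)
  refine ⟨tendsto_sq_deriv_mul_exp_of_sq_deriv_eq hγ hc hfb (eventually_of_mem hI hfG), ?_,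
    -l, neg_pos.2 hl, fun k hk => ?_⟩
  · refine ⟨γ * L, ((tendsto_half_deriv_add_mul_atBot hG hGL γ).comp hfb).congr' ?_⟩
    filter_upwards [Ioo_mem_nhdsLT hl] with τ hτ
    exact (hfψ τ hτ).symm
  · rw [neg_neg]
    refine exists_abs_iteratedDeriv_le_mul_abs_deriv_pow isOpen_Ioo (hf.mono hJI)
      ((contDiff_infty_iff_deriv.1 hRs).2.div_const 2) hψs.1 hfQ hfψ
      (exists_abs_iteratedDeriv_half_deriv_le_mul_sq hγ.le hm hG hJ') (fun j => ?_) hk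
    obtain ⟨C, hC⟩ := bddDerivsOnNonpos.exists_bound_of_le hψs j
    exact ⟨C, fun x hx i hi => hC i hi (f x) (hJ' x hx).1⟩

theorem exists_tendsto_exp_mul_sub_atBot {α : ℝ} {μ : ℝ → ℝ} (hα : 0 ≤ α)
    (hμ : Tendsto μ atBot (𝓝 0)) : ∃ L, Tendsto (fun u => exp (α * u - μ u)) atBot (𝓝 L) := by
  rcases hα.eq_or_lt with rfl | hα
  · exact ⟨1, by simpa [Function.comp_def] using (continuous_exp.tendsto _).comp hμ.neg⟩
  · exact ⟨0, tendsto_exp_atBot.comp <| by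
      simpa only [sub_eq_add_neg, id] using (tendsto_id.const_mul_atBot hα).atBot_add hμ.neg⟩

theorem exp_mul_sub_mem_bddDerivsOnNonpos {α : ℝ} {μ ν : ℝ → ℝ} (hα : 0 ≤ α)
    (hμ : ∀ t, HasDerivAt μ (ν t) t) (hν : ν ∈ bddDerivsOnNonpos) (hμ0 : Tendsto μ atBot (𝓝 0)) :
    (fun u => exp (α * u - μ u)) ∈ bddDerivsOnNonpos := by
  have hμs : ContDiff ℝ ∞ μ := contDiff_infty_iff_deriv.2
    ⟨fun t => (hμ t).differentiableAt, by
      rw [show deriv μ = ν from funext fun t => (hμ t).deriv]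
      exact hν.1⟩
  have hs : ContDiff ℝ ∞ fun u => exp (α * u - μ u) := by fun_prop
  obtain ⟨L, hL⟩ := exists_tendsto_exp_mul_sub_atBot hα hμ0
  refine bddDerivsOnNonpos.mem_of_deriv_eq_mul hs (hs.continuous.exists_abs_le_of_tendsto_atBot hL)
    (sub_mem (bddDerivsOnNonpos.algebraMap_mem α) hν) (funext fun u => ?_)
  have := ((((hasDerivAt_id' u).const_mul α).sub (hμ u)).exp)
  simpa [mul_comm] using this.deriv

theorem exp_mem_bddDerivsOnNonpos : exp ∈ bddDerivsOnNonpos :=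
  bddDerivsOnNonpos.mem_of_deriv_eq_mul contDiff_exp
    ⟨1, fun u hu => by rw [abs_of_pos (exp_pos u)]; exact exp_le_one_iff.2 hu⟩
    (one_mem _) (by simp)

theorem arw_sufficient_small_omega
    (n : ℕ) (hn : 3 ≤ n)
    (m Λ κt κ σ ω₀ ρ₀ : ℝ)
    (hm : 0 < m)
    (lam μt : ℝ → ℝ)
    (hlam : ContDiff ℝ (⊤ : ℕ∞) lam)
    (hμt : ∀ t : ℝ, HasDerivAt μt (lam t) t)
    (hμt0 : Filter.Tendsto μt Filter.atBot (nhds 0))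
    (a : ℝ) (ha : 0 < a) (f : ℝ → ℝ)
    (hf : ContDiffOn ℝ (⊤ : ℕ∞) f (Set.Ioo (-a) 0))
    (hfb : Filter.Tendsto f (nhdsWithin 0 (Set.Iio 0)) Filter.atBot)
    (hFried : ∀ τ ∈ Set.Ioo (-a) (0:ℝ),
      (deriv f τ) ^ 2
        = m * Real.exp (-((n : ℝ) - 1) * f τ)
          + (2 * Λ / ((n : ℝ) * ((n : ℝ) + 1))) * Real.exp (2 * f τ) - κt
          + (κ ^ 2 / (n : ℝ) ^ 2)
            * (σ + ρ₀ * Real.exp (-((n : ℝ) + ω₀) * f τ - μt (f τ))) ^ 2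
            * Real.exp (2 * f τ))
    (hω₀ : ω₀ ≤ -((n : ℝ) - 1))
    (hlamB : ∀ k : ℕ, ∃ c : ℝ, ∀ t : ℝ, |iteratedDeriv k lam t| ≤ c) :
    ARWConds (((n : ℝ) - 1) / 2) m f
      ∧ Filter.Tendsto (fun τ => (deriv f τ) ^ 2 * Real.exp (((n : ℝ) - 1) * f τ))
          (nhdsWithin 0 (Set.Iio 0)) (nhds m) := by
  have hγ : 0 < ((n : ℝ) - 1) / 2 := by have : (3 : ℝ) ≤ n := mod_cast hn; linarith
  have hα : 0 ≤ 1 - ((n : ℝ) + ω₀) := by linarith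
  set q : ℝ → ℝ := fun u => exp ((1 - ((n : ℝ) + ω₀)) * u - μt u) with hq
  have hqS : q ∈ bddDerivsOnNonpos := exp_mul_sub_mem_bddDerivsOnNonpos hα hμt
    ⟨hlam, fun k => (hlamB k).imp fun c hc u _ => hc u⟩ hμt0
  obtain ⟨Lq, hqL⟩ := exists_tendsto_exp_mul_sub_atBot hα hμt0
  set G : ℝ → ℝ := fun u => 2 * Λ / ((n : ℝ) * ((n : ℝ) + 1)) * exp u ^ 2 - κt
    + κ ^ 2 / (n : ℝ) ^ 2 * (σ * exp u + ρ₀ * q u) ^ 2 with hG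
  have hGS : G ∈ bddDerivsOnNonpos := by
    have hc : ∀ c : ℝ, (fun _ => c) ∈ bddDerivsOnNonpos := bddDerivsOnNonpos.algebraMap_mem
    have he := exp_mem_bddDerivsOnNonpos
    exact add_mem (sub_mem (mul_mem (hc _) (pow_mem he 2)) (hc _))
      (mul_mem (hc _) (pow_mem (add_mem (mul_mem (hc _) he) (mul_mem (hc _) hqS)) 2))
  have hGL : Tendsto G atBot (𝓝 _) :=
    ((tendsto_const_nhds.mul (tendsto_exp_atBot.pow 2)).sub tendsto_const_nhds).add
      (tendsto_const_nhds.mul (((tendsto_const_nhds.mul tendsto_exp_atBot).add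
        (tendsto_const_nhds.mul hqL)).pow 2))
  have hfG : ∀ τ ∈ Ioo (-a) 0,
      deriv f τ ^ 2 = m * exp (-(2 * (((n : ℝ) - 1) / 2)) * f τ) + G (f τ) := fun τ hτ => by
    have e₁ : exp (2 * f τ) = exp (f τ) ^ 2 := by rw [sq, ← exp_add, two_mul]
    have e₂ : q (f τ) = exp (-((n : ℝ) + ω₀) * f τ - μt (f τ)) * exp (f τ) := by
      rw [hq, ← exp_add]
      ring_nf
    rw [hFried τ hτ, hG]
    beta_reduce
    rw [e₁, e₂, show -(2 * (((n : ℝ) - 1) / 2)) = -((n : ℝ) - 1) by ring]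
    ring
  have hARW := arwConds_of_sq_deriv_eq hγ hm hGS hGL ha hf hfb hfG
  refine ⟨hARW, ?_⟩
  simpa only [show 2 * (((n : ℝ) - 1) / 2) = (n : ℝ) - 1 by ring] using hARW.1
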